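/- arXiv:0912.4483 — 2 statements merged into one kernel-verified Lean document; each statement's English description precedes it below -/
import Mathlib

section
/- The parameter space B ⊂ ℝ⁶ of flat pairs of pants with one singularity, defined by: 0 < l_i, l_i ≤ l_{i+1} + l_{i+2}, 0 < a_i, a_i ≤ a_{i+1} + a_{i+2} (all indices mod 3), together with the condition that for every i, if l_i = l_{i+1} + l_{i+2} then a_i < a_{i+1} + a_{i+2}, is a convex subset of ℝ⁶. -/
/-- The distance-parameter space `B ⊂ ℝ⁶` of flat pairs of pants with one
singularity is convex. -/
theorem parameter_space_convex :
    Convex ℝ {x : (Fin 3 → ℝ) × (Fin 3 → ℝ) |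
      (∀ i, 0 < x.1 i) ∧ (∀ i, x.1 i ≤ x.1 (i + 1) + x.1 (i + 2)) ∧
      (∀ i, 0 < x.2 i) ∧ (∀ i, x.2 i ≤ x.2 (i + 1) + x.2 (i + 2)) ∧
      (∀ i, x.1 i = x.1 (i + 1) + x.1 (i + 2) →
        x.2 i < x.2 (i + 1) + x.2 (i + 2))} := by
  rintro ⟨x1, x2⟩ ⟨hx1, hx2, hx3, hx4, hx5⟩ ⟨y1, y2⟩ ⟨hy1, hy2, hy3, hy4, hy5⟩
    a b ha hb hab
  dsimp only at hx1 hx2 hx3 hx4 hx5 hy1 hy2 hy3 hy4 hy5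
  simp only [Set.mem_setOf_eq, Prod.smul_mk, Prod.mk_add_mk, Pi.add_apply,
    Pi.smul_apply, smul_eq_mul]
  refine ⟨fun i => ?_, fun i => ?_, fun i => ?_, fun i => ?_, fun i h => ?_⟩
  · rcases eq_or_lt_of_le ha with h | h
    · have hb1 : b = 1 := by linarith
      rw [← h, hb1]; simpa using hy1 i
    · nlinarith [hx1 i, hy1 i, mul_nonneg hb (hy1 i).le]
  · nlinarith [hx2 i, hy2 i]
  · rcases eq_or_lt_of_le ha with h | h
    · have hb1 : b = 1 := by linarith
      rw [← h, hb1]; simpa using hy3 i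
    · nlinarith [hx3 i, hy3 i, mul_nonneg hb (hy3 i).le]
  · nlinarith [hx4 i, hy4 i]
  · have hA : a * (x1 (i + 1) + x1 (i + 2) - x1 i) = 0 := by
      nlinarith [hx2 i, hy2 i, mul_nonneg ha (sub_nonneg.2 (hx2 i)),
        mul_nonneg hb (sub_nonneg.2 (hy2 i))]
    have hB : b * (y1 (i + 1) + y1 (i + 2) - y1 i) = 0 := by
      nlinarith [hx2 i, hy2 i, mul_nonneg ha (sub_nonneg.2 (hx2 i)),
        mul_nonneg hb (sub_nonneg.2 (hy2 i))]
    rcases eq_or_lt_of_le ha with h | h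
    · have hb1 : b = 1 := by linarith
      have := hy5 i (by nlinarith)
      rw [← h, hb1]; simpa using this
    · have hxe : x1 i = x1 (i + 1) + x1 (i + 2) := by
        rcases mul_eq_zero.1 hA with h0 | h0
        · linarith
        · linarith
      have h1 := hx5 i hxe
      rcases eq_or_lt_of_le hb with h' | h'
      · have ha1 : a = 1 := by linarith
        rw [← h', ha1]; simpa using h1
      · have hye : y1 i = y1 (i + 1) + y1 (i + 2) := by
          rcases mul_eq_zero.1 hB with h0 | h0
          · linarith
          · linarith
        have h2 := hy5 i hye
        nlinarith
end

section
/- Suppose a closed surface is decomposed into p pairs of pants by a set C of pairwise disjoint simple closed curves, where each curve lies on the boundary of exactly two pairs of pants (or twice on one), and each pair of pants has exactly 3 boundary curves (with multiplicity); if a single point s must lie on the boundary of every pair of pants, and s can lie on at most one of the pairwise disjoint curves, then since one curve is on the boundary of at most 2 pairs of pants, the decomposition is impossible whenever p > 2. In particular, a closed flat surface of genus g ≥ 3 with exactly one conical singularity cannot be decomposed into flat pairs of pants by disjoint simple closed geodesics (where p = 2g − 2 ≥ 4). -/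
/-- Combinatorial impossibility of a pants decomposition of a closed flat
surface of genus `g ≥ 3` with a single singularity: with pants set `P`
(`|P| = 2g − 2`), curves `C`, multiplicity `m p c`, each pants incident to 3
curves and each curve to 2 pants, there is no curve on the boundary of every
pair of pants. -/
theorem no_pants_decomposition_one_singularity
    (P C : Type) [Fintype P] [Fintype C] (m : P → C → ℕ) (g : ℕ)
    (hg : 3 ≤ g) (hcard : Fintype.card P = 2 * g - 2)
    (hpants : ∀ p, ∑ c, m p c = 3)
    (hcurves : ∀ c, ∑ p, m p c = 2) :
    ¬ ∃ c₀ : C, ∀ p : P, 1 ≤ m p c₀ := by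
  rintro ⟨c₀, hc₀⟩
  have h1 : Fintype.card P ≤ ∑ p, m p c₀ := by
    rw [← Finset.card_univ, Finset.card_eq_sum_ones]
    exact Finset.sum_le_sum fun p _ => hc₀ p
  have h2 := hcurves c₀
  have h3 : (4 : ℕ) ≤ Fintype.card P := by omega
  omega
end
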